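/- Let Q ∈ ℝ^{n×n} be symmetric positive definite, A ∈ ℝ^{m×n}, b ∈ ℝᵐ, d ∈ ℝⁿ and τ > 0. Let p, q ∈ [1, ∞] be conjugate exponents (1/p + 1/q = 1), and let ‖·‖_p and ‖·‖_q denote the corresponding ℓ_p and ℓ_q norms. If y* maximizes the concave function y ↦ −(1/2)(d + Aᵀy)ᵀ Q⁻¹ (d + Aᵀy) − bᵀ y over the set {y ∈ ℝᵐ : ‖y‖_q ≤ τ}, then u* := Q⁻¹(d + Aᵀ y*) is the unique global minimizer of u ↦ (1/2) uᵀ Q u − dᵀ u + τ‖A u + b‖_p over ℝⁿ. -/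

import Mathlib

/-!
Weak duality through the Lagrangian `L(u, y) = ½uᵀQu − dᵀu − yᵀ(Au + b)`: by Hölder,
`τ‖w‖_p ≥ −yᵀw` whenever `‖y‖_q ≤ τ`, so the primal objective dominates `L(·, y*)`, and completing
the square gives `L(u, y*) = D(y*) + ½(u − u*)ᵀQ(u − u*)`. Equality holds at `u*`: since `Au* + b`
is minus the gradient of the concave dual objective at `y*`, first-order optimality says that
`y ↦ (Au* + b)ᵀy` is minimised over the `ℓ_q` ball of radius `τ` at `y*`, and by the duality of
the `ℓ_p` and `ℓ_q` norms that minimum is `−τ‖Au* + b‖_p`.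
-/

open Matrix
open scoped ENNReal

/-- The `ℓ_p` norm of a vector in `Fin k → ℝ`, for `p ∈ [1, ∞]`. -/
noncomputable def pnorm {k : ℕ} (p : ℝ≥0∞) [Fact (1 ≤ p)] (v : Fin k → ℝ) : ℝ :=
  ‖(WithLp.equiv p (Fin k → ℝ)).symm v‖

/-- Primal objective `u ↦ (1/2)uᵀQu − dᵀu + τ‖Au + b‖_p`. -/
noncomputable def primalObj {m n : ℕ} (Q : Matrix (Fin n) (Fin n) ℝ)
    (A : Matrix (Fin m) (Fin n) ℝ) (b : Fin m → ℝ) (d : Fin n → ℝ) (τ : ℝ)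
    (p : ℝ≥0∞) [Fact (1 ≤ p)] (u : Fin n → ℝ) : ℝ :=
  1 / 2 * (u ⬝ᵥ Q.mulVec u) - d ⬝ᵥ u + τ * pnorm p (A.mulVec u + b)

/-- Dual objective `y ↦ −(1/2)(d + Aᵀy)ᵀ Q⁻¹ (d + Aᵀy) − bᵀy`. -/
noncomputable def dualObj {m n : ℕ} (Q : Matrix (Fin n) (Fin n) ℝ)
    (A : Matrix (Fin m) (Fin n) ℝ) (b : Fin m → ℝ) (d : Fin n → ℝ)
    (y : Fin m → ℝ) : ℝ :=
  -(1 / 2) * ((d + Aᵀ.mulVec y) ⬝ᵥ Q⁻¹.mulVec (d + Aᵀ.mulVec y)) - b ⬝ᵥ y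

open Filter Topology

lemma abs_sign_le_one {α : Type*} [Ring α] [LinearOrder α] [IsStrictOrderedRing α] (x : α) :
    |(SignType.sign x : α)| ≤ 1 := by
  rcases lt_trichotomy x 0 with h | rfl | h <;> simp [*]

lemma nonpos_of_forall_mul_le_sq_mul {a K : ℝ}
    (h : ∀ t : ℝ, 0 < t → t ≤ 1 → t * a ≤ t ^ 2 * K) : a ≤ 0 := by
  have hlim : Tendsto (fun t : ℝ => t * K) (𝓝[>] 0) (𝓝 0) := by
    simpa using ((continuous_mul_const K).tendsto 0).mono_left nhdsWithin_le_nhds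
  refine ge_of_tendsto hlim ?_
  filter_upwards [Ioc_mem_nhdsGT one_pos] with t ⟨ht₀, ht₁⟩
  exact le_of_mul_le_mul_left (by linarith [h t ht₀ ht₁]) ht₀

section pnorm

variable {k : ℕ} {p q : ℝ≥0∞} [Fact (1 ≤ p)] [Fact (1 ≤ q)]

lemma pnorm_eq_norm_toLp (v : Fin k → ℝ) : pnorm p v = ‖WithLp.toLp p v‖ := rfl

lemma pnorm_nonneg (v : Fin k → ℝ) : 0 ≤ pnorm p v := norm_nonneg _

lemma pnorm_neg (v : Fin k → ℝ) : pnorm p (-v) = pnorm p v := by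
  simp [pnorm_eq_norm_toLp]

lemma pnorm_smul (c : ℝ) (v : Fin k → ℝ) : pnorm p (c • v) = |c| * pnorm p v := by
  simp [pnorm_eq_norm_toLp, WithLp.toLp_smul, norm_smul]

lemma convexOn_pnorm : ConvexOn ℝ Set.univ (pnorm p : (Fin k → ℝ) → ℝ) :=
  (convexOn_norm convex_univ).comp_linearMap
    (WithLp.linearEquiv p ℝ (Fin k → ℝ)).symm.toLinearMap

lemma pnorm_eq_sum (hp : p ≠ ∞) (v : Fin k → ℝ) :
    pnorm p v = (∑ i, |v i| ^ p.toReal) ^ (1 / p.toReal) := by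
  have hp0 : 0 < p.toReal := ENNReal.toReal_pos (one_pos.trans_le Fact.out).ne' hp
  simp [pnorm_eq_norm_toLp, PiLp.norm_eq_sum hp0]

lemma pnorm_pos {v : Fin k → ℝ} (hv : v ≠ 0) : 0 < pnorm p v :=
  norm_pos_iff.2 fun h => hv (by simpa using congrArg WithLp.ofLp h)

lemma sum_abs_div_pnorm_rpow_eq_one (hp : p ≠ ∞) {v : Fin k → ℝ} (hv : v ≠ 0) :
    ∑ i, (|v i| / pnorm p v) ^ p.toReal = 1 := by
  have hp0 : p.toReal ≠ 0 := (ENNReal.toReal_pos (one_pos.trans_le Fact.out).ne' hp).ne'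
  have hN := pnorm_pos (p := p) hv
  have hNp : pnorm p v ^ p.toReal = ∑ i, |v i| ^ p.toReal := by
    rw [pnorm_eq_sum hp, ← Real.rpow_mul (by positivity), one_div_mul_cancel hp0, Real.rpow_one]
  simp only [Real.div_rpow (abs_nonneg _) hN.le, ← Finset.sum_div, ← hNp]
  exact div_self (by positivity)

lemma dotProduct_le_pnorm_mul_pnorm [p.HolderConjugate q] (x y : Fin k → ℝ) :
    x ⬝ᵥ y ≤ pnorm p x * pnorm q y := by
  let e := (lpPiLpₗᵢ (fun _ : Fin k => ℝ) ℝ (p := p)).symm (WithLp.toLp p x)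
  let f := (lpPiLpₗᵢ (fun _ : Fin k => ℝ) ℝ (p := q)).symm (WithLp.toLp q y)
  let B : Fin k → ℝ →L[ℝ] ℝ →L[ℝ] ℝ := fun _ => ContinuousLinearMap.mul ℝ ℝ
  have hB : ∀ i, ‖B i‖ ≤ (1 : NNReal) := fun _ => by
    rw [NNReal.coe_one]
    exact ContinuousLinearMap.opNorm_mul_le ℝ ℝ
  have h := (lp.dualPairing p q B hB).le_opNorm₂ e f
  have hpair : lp.dualPairing p q B hB e f = x ⬝ᵥ y := by
    rw [lp.dualPairing_apply, tsum_fintype]; rfl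
  calc x ⬝ᵥ y ≤ ‖lp.dualPairing p q B hB e f‖ := hpair ▸ le_abs_self _
    _ ≤ 1 * ‖e‖ * ‖f‖ := h.trans (by gcongr; exact lp.norm_dualPairing B hB)
    _ = pnorm p x * pnorm q y := by simp [e, f, pnorm_eq_norm_toLp]

lemma exists_pnorm_top_le_one_dotProduct_eq_pnorm_one (v : Fin k → ℝ) :
    ∃ y, pnorm ∞ y ≤ 1 ∧ y ⬝ᵥ v = pnorm 1 v := by
  refine ⟨fun i => SignType.sign (v i), ?_, ?_⟩
  · rw [pnorm_eq_norm_toLp, PiLp.norm_toLp]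
    exact pi_norm_le_iff_of_nonneg zero_le_one |>.2 fun i => abs_sign_le_one (v i)
  · simp [pnorm_eq_norm_toLp, PiLp.norm_eq_of_L1, dotProduct]

lemma exists_pnorm_one_le_one_dotProduct_eq_pnorm_top (v : Fin k → ℝ) :
    ∃ y, pnorm 1 y ≤ 1 ∧ y ⬝ᵥ v = pnorm ∞ v := by
  rcases isEmpty_or_nonempty (Fin k) with hk | hk
  · exact ⟨0, by simp [pnorm_eq_norm_toLp], by simp [Subsingleton.elim v 0, pnorm_eq_norm_toLp]⟩
  obtain ⟨i, hi⟩ := Finite.exists_max fun j => |v j|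
  refine ⟨Pi.single i (SignType.sign (v i)), ?_, ?_⟩
  · rw [pnorm_eq_norm_toLp, PiLp.toLp_single, PiLp.norm_single]
    exact abs_sign_le_one (v i)
  · rw [single_dotProduct, sign_mul_self, pnorm_eq_norm_toLp, PiLp.norm_toLp]
    exact le_antisymm (norm_le_pi_norm v i) (pi_norm_le_iff_of_nonneg (abs_nonneg _) |>.2 hi)

lemma exists_pnorm_le_one_dotProduct_eq_pnorm_of_ne_top (hp : p ≠ ∞) (hq : q ≠ ∞)
    [p.HolderConjugate q] (v : Fin k → ℝ) :
    ∃ y, pnorm q y ≤ 1 ∧ y ⬝ᵥ v = pnorm p v := by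
  rcases eq_or_ne v 0 with rfl | hv
  · exact ⟨0, by simp [pnorm_eq_norm_toLp], by simp [pnorm_eq_norm_toLp]⟩
  have hpq := ENNReal.HolderConjugate.toReal_of_ne_top hp hq
  set r := p.toReal
  set N := pnorm p v
  have hN : 0 < N := pnorm_pos hv
  set w : Fin k → ℝ := fun i => |v i| / N
  have hw : ∀ i, 0 ≤ w i := fun i => div_nonneg (abs_nonneg _) hN.le
  have hsum : ∑ i, w i ^ r = 1 := sum_abs_div_pnorm_rpow_eq_one hp hv
  -- the equality case of Hölder's inequality
  refine ⟨fun i => SignType.sign (v i) * w i ^ (r - 1), ?_, ?_⟩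
  · rw [pnorm_eq_sum hq]
    refine Real.rpow_le_one (by positivity) ?_ (by positivity)
    calc ∑ i, |SignType.sign (v i) * w i ^ (r - 1)| ^ q.toReal
        ≤ ∑ i, (w i ^ (r - 1)) ^ q.toReal := by
          gcongr with i
          rw [abs_mul, abs_of_nonneg (Real.rpow_nonneg (hw i) _)]
          exact mul_le_of_le_one_left (by positivity) (abs_sign_le_one _)
      _ = ∑ i, w i ^ r := by
          simp only [← Real.rpow_mul (hw _), hpq.sub_one_mul_conj]
      _ = 1 := hsum
  · calc ∑ i, SignType.sign (v i) * w i ^ (r - 1) * v i = N * ∑ i, w i ^ r := by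
          rw [Finset.mul_sum]
          refine Finset.sum_congr rfl fun i _ => ?_
          have hvi : SignType.sign (v i) * v i = N * w i := by
            rw [sign_mul_self, mul_div_cancel₀ _ hN.ne']
          rw [mul_right_comm, hvi, mul_assoc, mul_comm (w i),
            ← Real.rpow_add_one' (hw i) (by linarith [hpq.lt]), sub_add_cancel]
      _ = N := by rw [hsum, mul_one]

lemma exists_pnorm_le_one_dotProduct_eq_pnorm [p.HolderConjugate q] (v : Fin k → ℝ) :
    ∃ y, pnorm q y ≤ 1 ∧ y ⬝ᵥ v = pnorm p v := by
  rcases eq_or_ne p ∞ with rfl | hp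
  · obtain rfl : q = 1 := (ENNReal.HolderConjugate.eq_top_iff_eq_one ∞ q).1 rfl
    exact exists_pnorm_one_le_one_dotProduct_eq_pnorm_top v
  rcases eq_or_ne q ∞ with rfl | hq
  · obtain rfl : p = 1 := (ENNReal.HolderConjugate.eq_top_iff_eq_one ∞ p).1 rfl
    exact exists_pnorm_top_le_one_dotProduct_eq_pnorm_one v
  exact exists_pnorm_le_one_dotProduct_eq_pnorm_of_ne_top hp hq v

lemma neg_dotProduct_le_mul_pnorm [p.HolderConjugate q] {τ : ℝ} {y : Fin k → ℝ}
    (hy : pnorm q y ≤ τ) (w : Fin k → ℝ) : -(y ⬝ᵥ w) ≤ τ * pnorm p w :=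
  calc -(y ⬝ᵥ w) = w ⬝ᵥ -y := by rw [dotProduct_neg, dotProduct_comm]
    _ ≤ pnorm p w * pnorm q (-y) := dotProduct_le_pnorm_mul_pnorm w (-y)
    _ ≤ τ * pnorm p w := by rw [pnorm_neg, mul_comm]; gcongr; exact pnorm_nonneg w

lemma dotProduct_eq_neg_mul_pnorm_of_forall_le [p.HolderConjugate q] {τ : ℝ}
    {v ystar : Fin k → ℝ} (hfeas : pnorm q ystar ≤ τ)
    (hmin : ∀ y, pnorm q y ≤ τ → v ⬝ᵥ ystar ≤ v ⬝ᵥ y) :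
    ystar ⬝ᵥ v = -(τ * pnorm p v) := by
  have hτ : 0 ≤ τ := (pnorm_nonneg ystar).trans hfeas
  obtain ⟨y₀, hy₀, hy₀v⟩ := exists_pnorm_le_one_dotProduct_eq_pnorm (p := p) (q := q) v
  have hfeas₀ : pnorm q ((-τ) • y₀) ≤ τ := by
    rw [pnorm_smul, abs_neg, abs_of_nonneg hτ]
    exact mul_le_of_le_one_right hτ hy₀
  have hle := hmin _ hfeas₀
  rw [dotProduct_smul, dotProduct_comm v y₀, hy₀v, smul_eq_mul] at hle
  have hge := neg_dotProduct_le_mul_pnorm (p := p) hfeas v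
  rw [dotProduct_comm] at hle
  linarith

end pnorm

lemma Matrix.IsSymm.dotProduct_mulVec_comm {n α : Type*} [Fintype n] [CommSemiring α]
    {Q : Matrix n n α} (hQ : Q.IsSymm) (x y : n → α) : x ⬝ᵥ Q *ᵥ y = y ⬝ᵥ Q *ᵥ x := by
  conv_lhs => rw [← hQ.eq]
  exact dotProduct_transpose_mulVec Q x y

/-- The primal objective is the maximum of the Lagrangian over `‖y‖_q ≤ τ`. -/
noncomputable def lagrangian {m n : ℕ} (Q : Matrix (Fin n) (Fin n) ℝ)
    (A : Matrix (Fin m) (Fin n) ℝ) (b : Fin m → ℝ) (d : Fin n → ℝ)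
    (u : Fin n → ℝ) (y : Fin m → ℝ) : ℝ :=
  1 / 2 * (u ⬝ᵥ Q *ᵥ u) - d ⬝ᵥ u - y ⬝ᵥ (A *ᵥ u + b)

section Lagrangian

variable {m n : ℕ} {Q : Matrix (Fin n) (Fin n) ℝ} {A : Matrix (Fin m) (Fin n) ℝ}
  {b : Fin m → ℝ} {d : Fin n → ℝ}

lemma lagrangian_le_primalObj {τ : ℝ} {p q : ℝ≥0∞} [Fact (1 ≤ p)] [Fact (1 ≤ q)]
    [p.HolderConjugate q] {y : Fin m → ℝ} (hy : pnorm q y ≤ τ) (u : Fin n → ℝ) :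
    lagrangian Q A b d u y ≤ primalObj Q A b d τ p u := by
  have := neg_dotProduct_le_mul_pnorm (p := p) hy (A *ᵥ u + b)
  rw [lagrangian, primalObj]
  linarith

lemma primalObj_eq_lagrangian {τ : ℝ} {p : ℝ≥0∞} [Fact (1 ≤ p)] {u : Fin n → ℝ}
    {y : Fin m → ℝ} (hy : y ⬝ᵥ (A *ᵥ u + b) = -(τ * pnorm p (A *ᵥ u + b))) :
    primalObj Q A b d τ p u = lagrangian Q A b d u y := by
  rw [lagrangian, primalObj, hy]
  ring

/-- Completing the square: the dual objective is the minimum of the Lagrangian over `u`. -/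
lemma lagrangian_eq_dualObj_add (hQ : Q.IsSymm) (hQdet : IsUnit Q.det)
    (u : Fin n → ℝ) (y : Fin m → ℝ) :
    lagrangian Q A b d u y = dualObj Q A b d y +
      1 / 2 * ((u - Q⁻¹ *ᵥ (d + Aᵀ *ᵥ y)) ⬝ᵥ Q *ᵥ (u - Q⁻¹ *ᵥ (d + Aᵀ *ᵥ y))) := by
  set g := d + Aᵀ *ᵥ y
  set uy := Q⁻¹ *ᵥ g
  have hQuy : Q *ᵥ uy = g := by rw [mulVec_mulVec, mul_nonsing_inv _ hQdet, one_mulVec]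
  have hcross : uy ⬝ᵥ Q *ᵥ u = u ⬝ᵥ g := by rw [hQ.dotProduct_mulVec_comm, hQuy]
  have hg : u ⬝ᵥ g = d ⬝ᵥ u + y ⬝ᵥ A *ᵥ u := by
    rw [dotProduct_add, dotProduct_transpose_mulVec, dotProduct_comm]
  rw [lagrangian, dualObj]
  simp only [mulVec_sub, dotProduct_sub, sub_dotProduct, hQuy, hcross, dotProduct_add]
  rw [dotProduct_comm uy g, dotProduct_comm b y]
  linear_combination hg

lemma dualObj_add_smul (hQ : Q.IsSymm) (y w : Fin m → ℝ) (t : ℝ) :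
    dualObj Q A b d (y + t • w) = dualObj Q A b d y
      - t * ((A *ᵥ (Q⁻¹ *ᵥ (d + Aᵀ *ᵥ y)) + b) ⬝ᵥ w)
      - t ^ 2 / 2 * (Aᵀ *ᵥ w ⬝ᵥ Q⁻¹ *ᵥ (Aᵀ *ᵥ w)) := by
  have hlin : d + Aᵀ *ᵥ (y + t • w) = d + Aᵀ *ᵥ y + t • Aᵀ *ᵥ w := by
    rw [mulVec_add, mulVec_smul, add_assoc]
  have hcross : Aᵀ *ᵥ w ⬝ᵥ Q⁻¹ *ᵥ (d + Aᵀ *ᵥ y) = (A *ᵥ (Q⁻¹ *ᵥ (d + Aᵀ *ᵥ y))) ⬝ᵥ w := by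
    rw [dotProduct_comm, dotProduct_transpose_mulVec, dotProduct_comm]
  have hsymm := hQ.inv.dotProduct_mulVec_comm (d + Aᵀ *ᵥ y) (Aᵀ *ᵥ w)
  rw [dualObj, dualObj, hlin]
  generalize d + Aᵀ *ᵥ y = g at hcross hsymm ⊢
  generalize Aᵀ *ᵥ w = a at hcross hsymm ⊢
  simp only [mulVec_add, mulVec_smul, dotProduct_add, add_dotProduct, dotProduct_smul,
    smul_dotProduct, smul_eq_mul]
  linear_combination (-(1 / 2) * t) * hsymm - t * hcross

/-- First-order optimality: `A Q⁻¹(d + Aᵀy*) + b` is minus the gradient of the dual objective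
at `y*`. -/
lemma dotProduct_le_of_isMaxOn_dualObj (hQ : Q.IsSymm) {S : Set (Fin m → ℝ)} (hS : Convex ℝ S)
    {ystar y : Fin m → ℝ} (hmax : IsMaxOn (dualObj Q A b d) S ystar) (hystar : ystar ∈ S)
    (hy : y ∈ S) :
    (A *ᵥ (Q⁻¹ *ᵥ (d + Aᵀ *ᵥ ystar)) + b) ⬝ᵥ ystar
      ≤ (A *ᵥ (Q⁻¹ *ᵥ (d + Aᵀ *ᵥ ystar)) + b) ⬝ᵥ y := by
  set v := A *ᵥ (Q⁻¹ *ᵥ (d + Aᵀ *ᵥ ystar)) + b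
  suffices -(v ⬝ᵥ (y - ystar)) ≤ 0 by rw [dotProduct_sub] at this; linarith
  refine nonpos_of_forall_mul_le_sq_mul
    (K := (Aᵀ *ᵥ (y - ystar) ⬝ᵥ Q⁻¹ *ᵥ (Aᵀ *ᵥ (y - ystar))) / 2) fun t ht₀ ht₁ => ?_
  have hle : dualObj Q A b d (ystar + t • (y - ystar)) ≤ dualObj Q A b d ystar :=
    hmax (hS.add_smul_sub_mem hystar hy ⟨ht₀.le, ht₁⟩)
  rw [dualObj_add_smul hQ] at hle
  linarith

end Lagrangian

theorem stmt_11_general {m n : ℕ} (Q : Matrix (Fin n) (Fin n) ℝ) (hQ : Q.PosDef)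
    (A : Matrix (Fin m) (Fin n) ℝ) (b : Fin m → ℝ) (d : Fin n → ℝ)
    (τ : ℝ)
    (p q : ℝ≥0∞) [Fact (1 ≤ p)] [Fact (1 ≤ q)] (hpq : 1 / p + 1 / q = 1)
    (ystar : Fin m → ℝ) (hfeas : pnorm q ystar ≤ τ)
    (hmax : ∀ y : Fin m → ℝ, pnorm q y ≤ τ → dualObj Q A b d y ≤ dualObj Q A b d ystar) :
    ∀ u : Fin n → ℝ, u ≠ Q⁻¹.mulVec (d + Aᵀ.mulVec ystar) →
      primalObj Q A b d τ p (Q⁻¹.mulVec (d + Aᵀ.mulVec ystar)) < primalObj Q A b d τ p u := by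
  intro u hu
  have : p.HolderConjugate q := ENNReal.holderConjugate_iff.2 (by simpa only [one_div] using hpq)
  have hQs : Q.IsSymm := isHermitian_iff_isSymm.1 hQ.isHermitian
  have hQdet : IsUnit Q.det := (isUnit_iff_isUnit_det Q).1 hQ.isUnit
  set ustar := Q⁻¹ *ᵥ (d + Aᵀ *ᵥ ystar)
  have hcompl : ystar ⬝ᵥ (A *ᵥ ustar + b) = -(τ * pnorm p (A *ᵥ ustar + b)) :=
    dotProduct_eq_neg_mul_pnorm_of_forall_le hfeas fun y hy =>
      dotProduct_le_of_isMaxOn_dualObj hQs (convexOn_pnorm.convex_le τ)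
        (fun y' hy' => hmax y' hy'.2) ⟨trivial, hfeas⟩ ⟨trivial, hy⟩
  have hQpos : 0 < (u - ustar) ⬝ᵥ Q *ᵥ (u - ustar) := by
    simpa using hQ.dotProduct_mulVec_pos (sub_ne_zero.2 hu)
  calc primalObj Q A b d τ p ustar = lagrangian Q A b d ustar ystar :=
        primalObj_eq_lagrangian hcompl
    _ = dualObj Q A b d ystar := by
      rw [lagrangian_eq_dualObj_add hQs hQdet, sub_self, zero_dotProduct, mul_zero, add_zero]
    _ < dualObj Q A b d ystar + 1 / 2 * ((u - ustar) ⬝ᵥ Q *ᵥ (u - ustar)) := by linarith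
    _ = lagrangian Q A b d u ystar := (lagrangian_eq_dualObj_add hQs hQdet u ystar).symm
    _ ≤ primalObj Q A b d τ p u := lagrangian_le_primalObj hfeas u

/-- **Theorem `th::thProx-dual` (primal recovery from a dual solution).**
If `y*` maximizes the dual objective over `{y : ‖y‖_q ≤ τ}` (with `1/p + 1/q = 1`), then
`u* = Q⁻¹(d + Aᵀy*)` is the unique global minimizer of
`u ↦ (1/2)uᵀQu − dᵀu + τ‖Au + b‖_p`. -/
theorem stmt_11 {m n : ℕ} (Q : Matrix (Fin n) (Fin n) ℝ) (hQ : Q.PosDef)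
    (A : Matrix (Fin m) (Fin n) ℝ) (b : Fin m → ℝ) (d : Fin n → ℝ)
    (τ : ℝ) (hτ : 0 < τ)
    (p q : ℝ≥0∞) [Fact (1 ≤ p)] [Fact (1 ≤ q)] (hpq : 1 / p + 1 / q = 1)
    (ystar : Fin m → ℝ) (hfeas : pnorm q ystar ≤ τ)
    (hmax : ∀ y : Fin m → ℝ, pnorm q y ≤ τ → dualObj Q A b d y ≤ dualObj Q A b d ystar) :
    ∀ u : Fin n → ℝ, u ≠ Q⁻¹.mulVec (d + Aᵀ.mulVec ystar) →
      primalObj Q A b d τ p (Q⁻¹.mulVec (d + Aᵀ.mulVec ystar)) < primalObj Q A b d τ p u :=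
  stmt_11_general Q hQ A b d τ p q hpq ystar hfeas hmax
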